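/- If ρ and σ are density operators with (1/2)‖ρ - σ‖₁ ≤ ε ≤ 1 on a Hilbert space of dimension d, then |H(ρ) - H(σ)| ≤ ε log d + h(ε), where h(ε) = -ε log ε - (1-ε) log(1-ε) is the binary entropy (Fannes–Audenaert continuity bound, Fannes version acceptable: |H(ρ)-H(σ)| ≤ 2ε log d + h(2ε) for ε ≤ 1/(2e)). -/

import Mathlib

open Matrix Kronecker Finset
open scoped ComplexOrder

noncomputable section

namespace QRelay

variable {n : Type*} [Fintype n] [DecidableEq n]

/-- Von Neumann entropy (in bits) of a matrix, via its eigenvalues when Hermitian. -/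
def vN (ρ : Matrix n n ℂ) : ℝ :=
  if h : ρ.IsHermitian then -∑ i, h.eigenvalues i * Real.logb 2 (h.eigenvalues i) else 0

/-- A density operator: positive semidefinite with unit trace. -/
def IsDensity (ρ : Matrix n n ℂ) : Prop := ρ.PosSemidef ∧ ρ.trace = 1

/-- Trace norm: the sum of singular values. -/
def trNorm (X : Matrix n n ℂ) : ℝ :=
  ∑ i, Real.sqrt ((Matrix.posSemidef_conjTranspose_mul_self X).1.eigenvalues i)

/-- Partial trace over the first tensor factor. -/
def ptrFst {A B : Type*} [Fintype A] [Fintype B] (ρ : Matrix (A × B) (A × B) ℂ) :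
    Matrix B B ℂ :=
  Matrix.of fun b b' => ∑ a, ρ (a, b) (a, b')

/-- Partial trace over the second tensor factor. -/
def ptrSnd {A B : Type*} [Fintype A] [Fintype B] (ρ : Matrix (A × B) (A × B) ℂ) :
    Matrix A A ℂ :=
  Matrix.of fun a a' => ∑ b, ρ (a, b) (a', b)

/-- Binary entropy (base 2). -/
def binEnt (ε : ℝ) : ℝ := -(ε * Real.logb 2 ε) - (1 - ε) * Real.logb 2 (1 - ε)

end QRelay

/-!
Read `ρ` in an eigenbasis `(uᵢ)` of `σ`. Its diagonal `p` there is the image of the spectrum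
`(λₖ)` of `ρ` under the doubly stochastic matrix `(|⟪uᵢ, vₖ⟫|²)`, `(vₖ)` an eigenbasis of `ρ`,
so concavity of `-x log x` gives `H(ρ) ≤ H(p)`, and convexity of `|·|` gives
`‖p - spec σ‖₁ ≤ ‖ρ - σ‖₁`. This reduces the bound to probability vectors `p`, `q` at total
variation distance at most `ε`. Split off a common part `r ≤ min p q` of mass `1 - ε`, so that
`p = r + a`, `q = r + b` with `a`, `b` of mass `ε`. Subadditivity of `-x log x` gives
`H(p) ≤ H(r) + H(a)`, concavity gives `H(q) ≥ H(r) + H(b) - h(ε)`, and for the remainders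
`H(a) ≤ -ε log ε + ε log d` (Jensen) and `H(b) ≥ -ε log ε`.
-/

namespace Real

lemma negMulLog_add_le {x y : ℝ} (hx : 0 ≤ x) (hy : 0 ≤ y) :
    negMulLog (x + y) ≤ negMulLog x + negMulLog y := by
  rcases hx.eq_or_lt with rfl | hx
  · simp
  rcases hy.eq_or_lt with rfl | hy
  · simp
  have hlx := log_le_log hx (le_add_of_nonneg_right hy.le)
  have hly := log_le_log hy (le_add_of_nonneg_left hx.le)
  simp only [negMulLog]
  nlinarith [mul_le_mul_of_nonneg_left hlx hx.le, mul_le_mul_of_nonneg_left hly hy.le]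

lemma negMulLog_sum_le {ι : Type*} (s : Finset ι) {f : ι → ℝ} (hf : ∀ i ∈ s, 0 ≤ f i) :
    negMulLog (∑ i ∈ s, f i) ≤ ∑ i ∈ s, negMulLog (f i) :=
  Finset.le_sum_of_subadditive_on_pred _ (0 ≤ ·) negMulLog_zero.le
    (fun _ _ => negMulLog_add_le) (fun _ _ => add_nonneg) _ hf

lemma negMulLog_add_mul_log_le {x y s t : ℝ} (hx : 0 ≤ x) (hy : 0 ≤ y) (hs : 0 < s) (ht : 0 < t)
    (hst : s + t = 1) :
    negMulLog x + x * log s + (negMulLog y + y * log t) ≤ negMulLog (x + y) := by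
  have hscale {z u : ℝ} (hu : 0 < u) : u * negMulLog (z / u) = negMulLog z + z * log u := by
    have := negMulLog_mul u (z / u)
    rw [mul_div_cancel₀ z hu.ne'] at this
    rw [this, show negMulLog u = -u * log u from rfl]
    field_simp
    ring
  have := concaveOn_negMulLog.2 (Set.mem_Ici.mpr (div_nonneg hx hs.le))
    (Set.mem_Ici.mpr (div_nonneg hy ht.le)) hs.le ht.le hst
  simpa only [smul_eq_mul, mul_div_cancel₀ _ hs.ne', mul_div_cancel₀ _ ht.ne', hscale hs,
    hscale ht] using this

variable {n : Type*} [Fintype n]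

lemma sum_negMulLog_le_negMulLog_sum_add_log_card (x : n → ℝ) (hx : ∀ i, 0 ≤ x i) :
    ∑ i, negMulLog (x i) ≤ negMulLog (∑ i, x i) + (∑ i, x i) * log (Fintype.card n) := by
  rcases isEmpty_or_nonempty n with hn | hn
  · simp
  have hd : (0 : ℝ) < Fintype.card n := by exact_mod_cast Fintype.card_pos
  have hjensen := concaveOn_negMulLog.le_map_sum (t := univ)
    (w := fun _ => (Fintype.card n : ℝ)⁻¹) (fun _ _ => by positivity) (by simp [hd.ne'])
    (fun i _ => Set.mem_Ici.mpr (hx i))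
  simp only [smul_eq_mul, ← Finset.mul_sum] at hjensen
  rw [negMulLog_mul, negMulLog, log_inv] at hjensen
  have := mul_le_mul_of_nonneg_left hjensen hd.le
  field_simp at this
  linarith

lemma sum_negMulLog_add_sum_negMulLog_le {a b : n → ℝ} (ha : ∀ i, 0 ≤ a i) (hb : ∀ i, 0 ≤ b i)
    (hab : ∑ i, a i + ∑ i, b i = 1) :
    ∑ i, negMulLog (a i) + ∑ i, negMulLog (b i)
      ≤ ∑ i, negMulLog (a i + b i) + negMulLog (∑ i, a i) + negMulLog (∑ i, b i) := by
  have eq_zero_of_sum {c : n → ℝ} (hc : ∀ i, 0 ≤ c i) (h : ∑ i, c i = 0) : c = 0 :=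
    funext fun i => (Finset.sum_eq_zero_iff_of_nonneg fun i _ => hc i).1 h i (mem_univ i)
  rcases (Finset.sum_nonneg fun i _ => ha i).eq_or_lt with hs | hs
  · obtain rfl := eq_zero_of_sum ha hs.symm
    simp only [Pi.zero_apply, sum_const_zero, zero_add] at hab
    simp [hab]
  rcases (Finset.sum_nonneg fun i _ => hb i).eq_or_lt with ht | ht
  · obtain rfl := eq_zero_of_sum hb ht.symm
    simp only [Pi.zero_apply, sum_const_zero, add_zero] at hab
    simp [hab]
  have := Finset.sum_le_sum fun i (_ : i ∈ univ) => negMulLog_add_mul_log_le (ha i) (hb i) hs ht hab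
  simp only [Finset.sum_add_distrib, ← Finset.sum_mul] at this
  have hna : negMulLog (∑ i, a i) = -(∑ i, a i) * log (∑ i, a i) := rfl
  have hnb : negMulLog (∑ i, b i) = -(∑ i, b i) * log (∑ i, b i) := rfl
  linarith

lemma exists_le_min_sum_eq {p q : n → ℝ} (hp : ∀ i, 0 ≤ p i) (hq : ∀ i, 0 ≤ q i) {m : ℝ}
    (hm0 : 0 ≤ m) (hm : m ≤ ∑ i, min (p i) (q i)) :
    ∃ r : n → ℝ, (∀ i, 0 ≤ r i ∧ r i ≤ p i ∧ r i ≤ q i) ∧ ∑ i, r i = m := by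
  set s := ∑ i, min (p i) (q i)
  have hmin i : 0 ≤ min (p i) (q i) := le_min (hp i) (hq i)
  have hs0 : 0 ≤ s := Finset.sum_nonneg fun i _ => hmin i
  have hc1 : m / s ≤ 1 := div_le_one_of_le₀ hm hs0
  refine ⟨fun i => m / s * min (p i) (q i),
    fun i => ⟨mul_nonneg (div_nonneg hm0 hs0) (hmin i), ?_, ?_⟩, ?_⟩
  · exact (mul_le_of_le_one_left (hmin i) hc1).trans (min_le_left _ _)
  · exact (mul_le_of_le_one_left (hmin i) hc1).trans (min_le_right _ _)
  · rw [← Finset.mul_sum]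
    rcases eq_or_ne s 0 with hs | hs
    · rw [hs, div_zero, zero_mul]
      linarith
    · exact div_mul_cancel₀ m hs

theorem sum_negMulLog_sub_sum_negMulLog_le {p q : n → ℝ} (hp : ∀ i, 0 ≤ p i)
    (hp1 : ∑ i, p i = 1) (hq : ∀ i, 0 ≤ q i) (hq1 : ∑ i, q i = 1) {ε : ℝ}
    (hpq : ∑ i, |p i - q i| ≤ 2 * ε) (hε1 : ε ≤ 1) :
    ∑ i, negMulLog (p i) - ∑ i, negMulLog (q i) ≤ ε * log (Fintype.card n) + binEntropy ε := by
  have hε0 : 0 ≤ ε := by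
    linarith [Finset.sum_nonneg fun i (_ : i ∈ univ) => abs_nonneg (p i - q i)]
  have hmin : 1 - ε ≤ ∑ i, min (p i) (q i) := by
    have h2min i : 2 * min (p i) (q i) = p i + q i - |p i - q i| := by
      linarith [min_add_max (p i) (q i), max_sub_min_eq_abs' (p i) (q i)]
    have := Finset.sum_congr rfl fun i (_ : i ∈ univ) => h2min i
    rw [← Finset.mul_sum, Finset.sum_sub_distrib, Finset.sum_add_distrib] at this
    linarith
  obtain ⟨r, hr, hr1⟩ := exists_le_min_sum_eq hp hq (by linarith) hmin
  have ha i : 0 ≤ p i - r i := sub_nonneg.2 (hr i).2.1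
  have hb i : 0 ≤ q i - r i := sub_nonneg.2 (hr i).2.2
  have ha1 : ∑ i, (p i - r i) = ε := by rw [Finset.sum_sub_distrib, hp1, hr1]; ring
  have hb1 : ∑ i, (q i - r i) = ε := by rw [Finset.sum_sub_distrib, hq1, hr1]; ring
  have hsplit : ∑ i, negMulLog (p i) ≤ ∑ i, negMulLog (r i) + ∑ i, negMulLog (p i - r i) := by
    rw [← Finset.sum_add_distrib]
    gcongr with i
    simpa using negMulLog_add_le (hr i).1 (ha i)
  have hmix := sum_negMulLog_add_sum_negMulLog_le (fun i => (hr i).1) hb (by rw [hr1, hb1]; ring)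
  have hupper := sum_negMulLog_le_negMulLog_sum_add_log_card _ ha
  have hlower := negMulLog_sum_le univ fun i _ => hb i
  simp only [add_sub_cancel, hr1, hb1, ha1] at hmix hupper hlower
  rw [binEntropy_eq_negMulLog_add_negMulLog_one_sub]
  linarith

end Real

section DoublyStochastic

variable {n : Type*} [Fintype n] [DecidableEq n]

lemma ConvexOn.sum_map_mulVec_le {s : Set ℝ} {f : ℝ → ℝ} (hf : ConvexOn ℝ s f)
    {M : Matrix n n ℝ} (hM : M ∈ doublyStochastic ℝ n) {x : n → ℝ} (hx : ∀ k, x k ∈ s) :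
    ∑ i, f ((M *ᵥ x) i) ≤ ∑ k, f (x k) :=
  calc ∑ i, f ((M *ᵥ x) i) ≤ ∑ i, ∑ k, M i k * f (x k) := by
        gcongr with i
        exact hf.map_sum_le (fun k _ => nonneg_of_mem_doublyStochastic hM)
          (sum_row_of_mem_doublyStochastic hM i) (fun k _ => hx k)
    _ = ∑ k, f (x k) := by
        rw [Finset.sum_comm]
        refine Finset.sum_congr rfl fun k _ => ?_
        rw [← Finset.sum_mul, sum_col_of_mem_doublyStochastic hM, one_mul]

lemma ConcaveOn.sum_map_le_sum_map_mulVec {s : Set ℝ} {f : ℝ → ℝ} (hf : ConcaveOn ℝ s f)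
    {M : Matrix n n ℝ} (hM : M ∈ doublyStochastic ℝ n) {x : n → ℝ} (hx : ∀ k, x k ∈ s) :
    ∑ k, f (x k) ≤ ∑ i, f ((M *ᵥ x) i) := by
  simpa using hf.neg.sum_map_mulVec_le hM hx

end DoublyStochastic

namespace Matrix

variable {n : Type*} [Fintype n]

/-- The real diagonal of `A` in the orthonormal basis formed by the columns of `U`. -/
def diagIn (U A : Matrix n n ℂ) (i : n) : ℝ := ((star U * A * U) i i).re

lemma diagIn_sub (U A B : Matrix n n ℂ) : diagIn U (A - B) = diagIn U A - diagIn U B := by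
  ext i
  simp [diagIn, Matrix.mul_sub, Matrix.sub_mul]

lemma PosSemidef.diagIn_nonneg {A : Matrix n n ℂ} (hA : A.PosSemidef) (U : Matrix n n ℂ)
    (i : n) : 0 ≤ diagIn U A i :=
  (Complex.nonneg_iff.mp (hA.conjTranspose_mul_mul_same U).diag_nonneg).1

variable [DecidableEq n]

lemma normSq_mem_doublyStochastic {U : Matrix n n ℂ} (hU : U ∈ unitaryGroup n ℂ) :
    (of fun i j => Complex.normSq (U i j)) ∈ doublyStochastic ℝ n := by
  rw [mem_doublyStochastic_iff_sum]
  refine ⟨fun i j => Complex.normSq_nonneg _, fun i => ?_, fun j => ?_⟩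
  · have h := congr_fun₂ (mem_unitaryGroup_iff.mp hU) i i
    simp only [mul_apply, star_apply, one_apply_eq, RCLike.star_def, Complex.mul_conj] at h
    exact_mod_cast h
  · have h := congr_fun₂ (mem_unitaryGroup_iff'.mp hU) j j
    simp only [mul_apply, star_apply, one_apply_eq, RCLike.star_def, mul_comm,
      Complex.mul_conj] at h
    exact_mod_cast h

lemma re_mul_diagonal_mul_star_apply_self (C : Matrix n n ℂ) (d : n → ℝ) (i : n) :
    ((C * diagonal (fun k => (d k : ℂ)) * star C) i i).re = ∑ k, Complex.normSq (C i k) * d k := by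
  rw [mul_apply, Complex.re_sum]
  simp only [mul_diagonal, star_apply, RCLike.star_def]
  refine Finset.sum_congr rfl fun k _ => ?_
  rw [mul_right_comm, Complex.mul_conj, ← Complex.ofReal_mul, Complex.ofReal_re]

lemma sum_diagIn {U : Matrix n n ℂ} (hU : U ∈ unitaryGroup n ℂ) (A : Matrix n n ℂ) :
    ∑ i, diagIn U A i = A.trace.re := by
  unfold diagIn
  rw [← Complex.re_sum]
  change (star U * A * U).trace.re = _
  rw [trace_mul_cycle, mem_unitaryGroup_iff.mp hU, one_mul]

lemma IsHermitian.diagIn_eigenvectorUnitary {A : Matrix n n ℂ} (hA : A.IsHermitian) :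
    diagIn hA.eigenvectorUnitary A = hA.eigenvalues := by
  have h := hA.conjStarAlgAut_star_eigenvectorUnitary
  rw [Unitary.conjStarAlgAut_apply, Unitary.coe_star, star_star] at h
  ext i
  simp [diagIn, h]

lemma IsHermitian.exists_diagIn_eq_mulVec {A : Matrix n n ℂ} (hA : A.IsHermitian)
    {U : Matrix n n ℂ} (hU : U ∈ unitaryGroup n ℂ) :
    ∃ M ∈ doublyStochastic ℝ n, diagIn U A = M *ᵥ hA.eigenvalues := by
  set C := star U * (hA.eigenvectorUnitary : Matrix n n ℂ)
  have hconj : star U * A * U = C * diagonal (fun k => (hA.eigenvalues k : ℂ)) * star C := by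
    conv_lhs => rw [hA.spectral_theorem, Unitary.conjStarAlgAut_apply]
    simp only [C, StarMul.star_mul, star_star, Matrix.mul_assoc]
    rfl
  refine ⟨_, normSq_mem_doublyStochastic
    (mul_mem (Unitary.star_mem hU) hA.eigenvectorUnitary.2), funext fun i => ?_⟩
  rw [diagIn, hconj, re_mul_diagonal_mul_star_apply_self]
  rfl

lemma IsHermitian.trace_cfc {A : Matrix n n ℂ} (hA : A.IsHermitian) (f : ℝ → ℝ) :
    (cfc f A).trace = ∑ i, (f (hA.eigenvalues i) : ℂ) := by
  rw [hA.cfc_eq, IsHermitian.cfc, Unitary.conjStarAlgAut_apply, trace_mul_cycle,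
    Unitary.coe_star_mul_self, one_mul, trace_diagonal]
  rfl

end Matrix

namespace QRelay

open Real

variable {n : Type*} [Fintype n] [DecidableEq n]

lemma ofReal_trNorm (X : Matrix n n ℂ) : (trNorm X : ℂ) = (cfc Real.sqrt (Xᴴ * X)).trace := by
  rw [(posSemidef_conjTranspose_mul_self X).1.trace_cfc, trNorm]
  push_cast
  rfl

lemma trNorm_neg (X : Matrix n n ℂ) : trNorm (-X) = trNorm X := by
  apply Complex.ofReal_injective
  rw [ofReal_trNorm, ofReal_trNorm, conjTranspose_neg, neg_mul_neg]

lemma trNorm_eq_sum_abs_eigenvalues {X : Matrix n n ℂ} (hX : X.IsHermitian) :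
    trNorm X = ∑ i, |hX.eigenvalues i| := by
  apply Complex.ofReal_injective
  -- found by the `cfc_tac` side-goal discharger of the CFC lemmas below
  have hX' : IsSelfAdjoint X := hX
  rw [ofReal_trNorm, hX.eq, ← sq, ← cfc_pow_id (R := ℝ) X 2,
    ← cfc_comp Real.sqrt (· ^ 2 : ℝ → ℝ) X, hX.trace_cfc]
  push_cast
  simp [Real.sqrt_sq_eq_abs]

lemma IsDensity.sum_eigenvalues {ρ : Matrix n n ℂ} (hρ : IsDensity ρ) :
    ∑ i, hρ.1.1.eigenvalues i = 1 := by
  rw [← Complex.ofReal_inj]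
  push_cast
  exact (hρ.2.symm.trans hρ.1.1.trace_eq_sum_eigenvalues).symm

lemma sum_negMulLog_eigenvalues_sub_le {ρ σ : Matrix n n ℂ} (hρ : IsDensity ρ) (hσ : IsDensity σ)
    {ε : ℝ} (hε : trNorm (ρ - σ) ≤ 2 * ε) (hε1 : ε ≤ 1) :
    ∑ i, negMulLog (hρ.1.1.eigenvalues i) - ∑ i, negMulLog (hσ.1.1.eigenvalues i)
      ≤ ε * log (Fintype.card n) + binEntropy ε := by
  set U : Matrix n n ℂ := ↑hσ.1.1.eigenvectorUnitary
  have hU : U ∈ unitaryGroup n ℂ := hσ.1.1.eigenvectorUnitary.2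
  have hq : diagIn U σ = hσ.1.1.eigenvalues := hσ.1.1.diagIn_eigenvectorUnitary
  have hpinch : ∑ i, negMulLog (hρ.1.1.eigenvalues i) ≤ ∑ i, negMulLog (diagIn U ρ i) := by
    obtain ⟨M, hM, h⟩ := hρ.1.1.exists_diagIn_eq_mulVec hU
    rw [h]
    exact concaveOn_negMulLog.sum_map_le_sum_map_mulVec hM fun k => hρ.1.eigenvalues_nonneg k
  have hdist : ∑ i, |diagIn U ρ i - hσ.1.1.eigenvalues i| ≤ 2 * ε := by
    have hΔ := hρ.1.1.sub hσ.1.1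
    obtain ⟨M, hM, h⟩ := hΔ.exists_diagIn_eq_mulVec hU
    calc ∑ i, |diagIn U ρ i - hσ.1.1.eigenvalues i| = ∑ i, |diagIn U (ρ - σ) i| := by
          rw [diagIn_sub, hq]; rfl
      _ ≤ ∑ i, |hΔ.eigenvalues i| := by
          rw [h]
          simpa only [Real.norm_eq_abs] using
            convexOn_univ_norm.sum_map_mulVec_le hM fun _ => Set.mem_univ _
      _ ≤ 2 * ε := (trNorm_eq_sum_abs_eigenvalues hΔ).symm ▸ hε
  have hp1 : ∑ i, diagIn U ρ i = 1 := by rw [sum_diagIn hU, hρ.2, Complex.one_re]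
  have := sum_negMulLog_sub_sum_negMulLog_le (hρ.1.diagIn_nonneg U) hp1
    hσ.1.eigenvalues_nonneg hσ.sum_eigenvalues hdist hε1
  linarith

lemma vN_eq_sum_negMulLog_div {A : Matrix n n ℂ} (hA : A.IsHermitian) :
    vN A = (∑ i, negMulLog (hA.eigenvalues i)) / log 2 := by
  rw [vN, dif_pos hA, Finset.sum_div, ← Finset.sum_neg_distrib]
  refine Finset.sum_congr rfl fun i _ => ?_
  rw [logb, negMulLog]
  ring

lemma binEnt_eq_binEntropy_div (ε : ℝ) : binEnt ε = binEntropy ε / log 2 := by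
  rw [binEnt, binEntropy_eq_negMulLog_add_negMulLog_one_sub, logb, logb, negMulLog, negMulLog]
  ring

lemma vN_sub_le {ρ σ : Matrix n n ℂ} (hρ : IsDensity ρ) (hσ : IsDensity σ) {ε : ℝ}
    (hε : trNorm (ρ - σ) ≤ 2 * ε) (hε1 : ε ≤ 1) :
    vN ρ - vN σ ≤ ε * logb 2 (Fintype.card n) + binEnt ε := by
  rw [vN_eq_sum_negMulLog_div hρ.1.1, vN_eq_sum_negMulLog_div hσ.1.1, binEnt_eq_binEntropy_div,
    logb, ← sub_div, mul_div_assoc', ← add_div]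
  exact div_le_div_of_nonneg_right (sum_negMulLog_eigenvalues_sub_le hρ hσ hε hε1)
    (log_pos one_lt_two).le

end QRelay

open QRelay in
/-- Fannes–Audenaert continuity bound for the von Neumann entropy:
if `(1/2)‖ρ - σ‖₁ ≤ ε ≤ 1` on a space of dimension `d`, then
`|H(ρ) - H(σ)| ≤ ε log d + h(ε)`. -/
theorem fannes_audenaert
    {n : Type*} [Fintype n] [DecidableEq n]
    (ρ σ : Matrix n n ℂ) (hρ : IsDensity ρ) (hσ : IsDensity σ)
    (ε : ℝ) (hε : (1 / 2) * trNorm (ρ - σ) ≤ ε) (hε1 : ε ≤ 1) :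
    |vN ρ - vN σ| ≤ ε * Real.logb 2 (Fintype.card n) + binEnt ε := by
  refine abs_sub_le_iff.2 ⟨vN_sub_le hρ hσ (by linarith) hε1, vN_sub_le hσ hρ ?_ hε1⟩
  rw [← neg_sub, trNorm_neg]
  linarith
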